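/- Let θ = 0, and let ε be a complex number satisfying either Re ε > 0 and ε⁻¹ ∉ ℤ, or Re ε = 0 and Im ε > 0. Set f(m,n) = −n(1+εn)/(1+ε(m+n)) for m,n ∈ ℤ. Suppose g: ℤ×ℤ → ℂ, h: ℤ×ℤ → ℂ, d: ℤ×ℤ → ℂ satisfy, for all m,n,r,s,t ∈ ℤ: g(m,r) − h(r,m) = m/2 − r; d(r,s) + d(s,r) = 2; (m−n)g(m+n,r) = g(n,r)g(m,n+r) − g(m,r)g(n,m+r); (m/2−r)h(m+r,n) = h(r,n)g(m,n+r) − f(m,n)h(r,m+n); (m/2−r)d(m+r,s) = d(r,s)f(m,r+s) − g(m,s)d(r,m+s); 2f(r+s,m) = h(s,m)d(r,m+s) + h(r,m)d(s,m+r); 2g(r+s,t) = d(s,t)h(r,s+t) + d(r,t)h(s,r+t). Then necessarily g(m,r) = −(m/2+r)(1+2εr)/(1+2ε(m+r)), h(r,m) = −m(1+εm)/(1+2ε(m+r)), and d(r,s) = (1+2εs)/(1+ε(r+s)) for all m,r,s ∈ ℤ. -/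

import Mathlib

/-! Put e(r,s) := d(r,s)(1+ε(r+s)). The relation for 2f(r+s,m) at r = s reads
h(r,m) e(r,m+r) = -m(1+εm), so h, and with it g, is determined by e, and the claim becomes
e(r,s) = 1+2εs. The remaining relations give e(r,s) + e(s,r) = 2+2ε(r+s), the 2s-periodicity of
e(·,s) (from the relation for h(m+r,n), since g(-2p,p) = 0), and a cross relation between e(r,s)
and e(-s,-r). Eliminating e(s,r), e(-s,-r) and e(-r,-s) leaves (e(r,s) - (1+2εs)) Q = 0, where Q is
quadratic in r with leading coefficient independent of e(r,s); since e(·,s) is constant along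
r + 2sℤ, Q cannot vanish at three consecutive points of it. -/

/-- f(m,n) = −n(1+εn)/(1+ε(m+n)) -/
noncomputable def vf (ε m n : ℂ) : ℂ := -n * (1 + ε * n) / (1 + ε * (m + n))

/-- g(m,r) = −(m/2+r)(1+2εr)/(1+2ε(m+r)) -/
noncomputable def vg (ε m r : ℂ) : ℂ :=
  -(m / 2 + r) * (1 + 2 * ε * r) / (1 + 2 * ε * (m + r))

/-- h(r,m) = −m(1+εm)/(1+2ε(m+r)) -/
noncomputable def vh (ε r m : ℂ) : ℂ := -m * (1 + ε * m) / (1 + 2 * ε * (m + r))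

/-- d(r,s) = (1+2εs)/(1+ε(r+s)) -/
noncomputable def vd (ε r s : ℂ) : ℂ := (1 + 2 * ε * s) / (1 + ε * (r + s))

structure RamondRelations (c : ℂ) (e : ℤ → ℤ → ℂ) : Prop where
  add_swap : ∀ r s : ℤ, e r s + e s r = 2 + c * (r + s)
  periodic : ∀ r s : ℤ, r ≠ s → r ≠ -s → e (r + 2 * s) s = e r s
  cross : ∀ r s : ℤ, r ≠ s →
    (1 + c * s) * e (-s) (-r) + (1 - c * r) * e r s = 2 * e r s * e (-s) (-r)

namespace RamondRelations

variable {c : ℂ} {e : ℤ → ℤ → ℂ}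

theorem sub_mul_quadratic_eq_zero (H : RamondRelations c e) {r s : ℤ} (hrs : r ≠ s) :
    (e r s - (1 + c * s)) * (2 * (2 - c * (r + s)) * e r s + (2 + c * (r + s)) ^ 2
      - 2 * (1 + c * r) - 6 * (1 + c * s)) = 0 := by
  have hy : e s r = 2 + c * (r + s) - e r s := by linear_combination H.add_swap s r
  have ht : e (-r) (-s) = 2 - c * (r + s) - e (-s) (-r) := by
    have := H.add_swap (-r) (-s); push_cast at this; linear_combination this
  have hC1 := H.cross r s hrs
  have hC2 := H.cross s r hrs.symm
  rw [hy, ht] at hC2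
  linear_combination (2 * e r s - (1 + c * s)) * hC2
    + (2 * (2 + c * (r + s) - e r s) - (1 + c * r)) * hC1

theorem add_four_mul (H : RamondRelations c e) {r s : ℤ} (h₁ : r ≠ s) (h₂ : r ≠ -s)
    (h₃ : r ≠ -3 * s) : e (r + 4 * s) s = e r s := by
  have h := H.periodic (r + 2 * s) s (by omega) (by omega)
  rw [show r + 2 * s + 2 * s = r + 4 * s by ring] at h
  rw [h, H.periodic r s h₁ h₂]

theorem eq_of_ne (H : RamondRelations c e) (hc : c ≠ 0) {r s : ℤ} (hs : s ≠ 0) (h₁ : r ≠ s)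
    (h₂ : r ≠ -s) (h₃ : r ≠ -3 * s) : e r s = 1 + c * s := by
  by_contra hne
  have hQ : ∀ k : ℤ, k ≠ s → e k s = e r s →
      2 * (2 - c * (k + s)) * e r s + (2 + c * (k + s)) ^ 2 - 2 * (1 + c * k) - 6 * (1 + c * s)
        = 0 := fun k hk hek ↦ by
    have := H.sub_mul_quadratic_eq_zero hk
    rw [hek] at this
    exact (mul_eq_zero.mp this).resolve_left (sub_ne_zero.mpr hne)
  have hQ₀ := hQ r h₁ rfl
  have hQ₂ := hQ (r + 2 * s) (by omega) (H.periodic r s h₁ h₂)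
  have hQ₄ := hQ (r + 4 * s) (by omega) (H.add_four_mul h₁ h₂ h₃)
  push_cast at hQ₂ hQ₄
  -- the second difference of `Q` along `r + 2sℤ` is `8 c² s²`
  have : 8 * c ^ 2 * (s : ℂ) ^ 2 = 0 := by linear_combination hQ₀ - 2 * hQ₂ + hQ₄
  simp [hc, hs] at this

theorem eq_of_ne_zero (H : RamondRelations c e) (hc : c ≠ 0) {s : ℤ} (hs : s ≠ 0) (r : ℤ) :
    e r s = 1 + c * s := by
  by_cases hrs : r = s
  · subst hrs
    linear_combination H.add_swap r r / 2
  by_cases hr : r = -s ∨ r = -3 * s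
  · have h := H.add_four_mul (r := r - 4 * s) (s := s) (by omega) (by omega) (by omega)
    rw [sub_add_cancel] at h
    rw [h]
    exact H.eq_of_ne hc hs (by omega) (by omega) (by omega)
  · exact H.eq_of_ne hc hs hrs (by omega) (by omega)

theorem eq (H : RamondRelations c e) (hc : c ≠ 0) (r s : ℤ) : e r s = 1 + c * s := by
  rcases eq_or_ne s 0 with rfl | hs
  · have h := H.add_swap r 0
    rcases eq_or_ne r 0 with rfl | hr
    · linear_combination h / 2
    · rw [H.eq_of_ne_zero hc hr 0] at h
      linear_combination h
  · exact H.eq_of_ne_zero hc hs r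

end RamondRelations

theorem one_add_mul_intCast_ne_zero {ε : ℂ}
    (hε : (0 < ε.re ∧ ∀ k : ℤ, ε⁻¹ ≠ (k : ℂ)) ∨ (ε.re = 0 ∧ 0 < ε.im)) (k : ℤ) :
    1 + ε * k ≠ 0 := by
  intro hk
  rcases hε with ⟨-, hint⟩ | ⟨hre, -⟩
  · exact hint (-k) (inv_eq_of_mul_eq_one_right (by push_cast; linear_combination -hk))
  · simpa [hre] using congrArg Complex.re hk

theorem ne_zero_of_re_pos_or_im_pos {ε : ℂ} (hε : 0 < ε.re ∨ 0 < ε.im) : ε ≠ 0 := by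
  rintro rfl
  simp at hε

def scaledD (ε : ℂ) (d : ℤ → ℤ → ℂ) (r s : ℤ) : ℂ := d r s * (1 + ε * (r + s))

section Relations

variable {ε : ℂ} {g h d : ℤ → ℤ → ℂ}

theorem scaledD_add_swap (h2 : ∀ r s : ℤ, d r s + d s r = 2) (r s : ℤ) :
    scaledD ε d r s + scaledD ε d s r = 2 + 2 * ε * (r + s) := by
  unfold scaledD
  linear_combination (1 + ε * (r + s)) * h2 r s

theorem scaledD_self (h2 : ∀ r s : ℤ, d r s + d s r = 2) (r : ℤ) :
    scaledD ε d r r = 1 + 2 * ε * r := by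
  linear_combination scaledD_add_swap (ε := ε) h2 r r / 2

theorem h_mul_scaledD (hε : ∀ k : ℤ, 1 + ε * k ≠ 0)
    (h6 : ∀ m r s : ℤ,
      2 * vf ε ((r : ℂ) + (s : ℂ)) m = h s m * d r (m + s) + h r m * d s (m + r)) (r m : ℤ) :
    h r m * scaledD ε d r (m + r) = -m * (1 + ε * m) := by
  have e := h6 m r r
  have hne : 1 + ε * ((r : ℂ) + r + m) ≠ 0 := by convert hε (2 * r + m) using 2; push_cast; ring
  unfold vf at e
  rw [← mul_div_assoc, div_eq_iff hne] at e
  unfold scaledD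
  push_cast
  linear_combination -e / 2

theorem h_zero_right (hε : ∀ k : ℤ, 1 + ε * k ≠ 0) (h2 : ∀ r s : ℤ, d r s + d s r = 2)
    (hhd : ∀ r m : ℤ, h r m * scaledD ε d r (m + r) = -m * (1 + ε * m)) (r : ℤ) : h r 0 = 0 := by
  have e := hhd r 0
  rw [zero_add, scaledD_self h2] at e
  have hne : 1 + 2 * ε * r ≠ 0 := by convert hε (2 * r) using 2; push_cast; ring
  simpa [hne] using e

theorem g_neg_two_mul_self
    (h7 : ∀ r s t : ℤ, 2 * g (r + s) t = d s t * h r (s + t) + d r t * h s (r + t))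
    (h0 : ∀ r, h r 0 = 0) (p : ℤ) : g (-(2 * p)) p = 0 := by
  have e := h7 (-p) (-p) p
  rw [show -p + -p = -(2 * p) by ring, neg_add_cancel, h0] at e
  linear_combination e / 2

theorem scaledD_neg_self (h1 : ∀ m r : ℤ, g m r - h r m = (m : ℂ) / 2 - (r : ℂ))
    (h2 : ∀ r s : ℤ, d r s + d s r = 2)
    (hhd : ∀ r m : ℤ, h r m * scaledD ε d r (m + r) = -m * (1 + ε * m))
    (hg : ∀ p : ℤ, g (-(2 * p)) p = 0) (s : ℤ) : scaledD ε d s (-s) = 1 - 2 * ε * s := by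
  rcases eq_or_ne s 0 with rfl | hs
  · simpa using scaledD_self (ε := ε) h2 0
  have e := hhd s (-(2 * s))
  have hh : h s (-(2 * s)) = 2 * s := by
    have := h1 (-(2 * s)) s
    rw [hg] at this
    push_cast at this
    linear_combination -this
  rw [hh, show -(2 * s) + s = -s by ring] at e
  push_cast at e
  have h2s : (2 * s : ℂ) ≠ 0 := by simpa using hs
  apply mul_left_cancel₀ h2s
  linear_combination e

theorem scaledD_cross (hε : ∀ k : ℤ, 1 + ε * k ≠ 0) (h2 : ∀ r s : ℤ, d r s + d s r = 2)
    (h6 : ∀ m r s : ℤ,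
      2 * vf ε ((r : ℂ) + (s : ℂ)) m = h s m * d r (m + s) + h r m * d s (m + r))
    (hhd : ∀ r m : ℤ, h r m * scaledD ε d r (m + r) = -m * (1 + ε * m))
    (hneg : ∀ s : ℤ, scaledD ε d s (-s) = 1 - 2 * ε * s) {r s : ℤ} (hrs : r ≠ s) :
    (1 + 2 * ε * s) * scaledD ε d (-s) (-r) + (1 - 2 * ε * r) * scaledD ε d r s
      = 2 * scaledD ε d r s * scaledD ε d (-s) (-r) := by
  have hdr : d r (-r) = 1 - 2 * ε * r := by simpa [scaledD] using hneg r
  have hds : d (-s) s = 1 + 2 * ε * s := by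
    have := scaledD_add_swap (ε := ε) h2 (-s) s
    rw [hneg s] at this
    simp only [scaledD, Int.cast_neg, neg_add_cancel, mul_zero, add_zero, mul_one] at this
    linear_combination this
  have e := h6 (s - r) r (-s)
  rw [show s - r + -s = -r by ring, sub_add_cancel, hdr, hds] at e
  have hf : vf ε (r + ((-s : ℤ) : ℂ)) ((s - r : ℤ) : ℂ) = -(s - r) * (1 + ε * (s - r)) := by
    simp only [vf]; push_cast; ring_nf
  rw [hf] at e
  have eA₁ := hhd r (s - r)
  have eA₂ := hhd (-s) (s - r)
  rw [sub_add_cancel] at eA₁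
  rw [show s - r + -s = -r by ring] at eA₂
  push_cast at eA₁ eA₂
  have hK : -((s : ℂ) - r) * (1 + ε * (s - r)) ≠ 0 := by
    refine mul_ne_zero (neg_ne_zero.mpr (sub_ne_zero.mpr (by exact_mod_cast hrs.symm))) ?_
    convert hε (s - r) using 2; push_cast; ring
  apply mul_left_cancel₀ hK
  linear_combination -(1 + 2 * ε * s) * scaledD ε d (-s) (-r) * eA₁
    - (1 - 2 * ε * r) * scaledD ε d r s * eA₂ - scaledD ε d r s * scaledD ε d (-s) (-r) * e

theorem scaledD_periodic (hε : ∀ k : ℤ, 1 + ε * k ≠ 0)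
    (h4 : ∀ m n r : ℤ,
      ((m : ℂ) / 2 - (r : ℂ)) * h (m + r) n = h r n * g m (n + r) - vf ε m n * h r (m + n))
    (hhd : ∀ r m : ℤ, h r m * scaledD ε d r (m + r) = -m * (1 + ε * m))
    (hg : ∀ p : ℤ, g (-(2 * p)) p = 0) {r s : ℤ} (h₁ : r ≠ s) (h₂ : r ≠ -s) :
    scaledD ε d (r + 2 * s) s = scaledD ε d r s := by
  have e := h4 (2 * s) (-s - r) r
  have hg' : g (2 * s) (-s) = 0 := by simpa using hg (-s)
  rw [show -s - r + r = -s by ring, hg', show 2 * s + r = r + 2 * s by ring,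
    show 2 * s + (-s - r) = s - r by ring] at e
  have hD : 1 + ε * ((s : ℂ) - r) ≠ 0 := by convert hε (s - r) using 2; push_cast; ring
  have hV : vf ε (2 * s) (-s - r) * (1 + ε * (s - r)) = (s + r) * (1 - ε * (s + r)) := by
    rw [vf, div_mul_eq_mul_div, div_eq_iff (by ring_nf at hD ⊢; exact hD)]
    ring
  have eA₁ := hhd (r + 2 * s) (-s - r)
  have eA₂ := hhd r (s - r)
  rw [show -s - r + (r + 2 * s) = s by ring] at eA₁
  rw [sub_add_cancel] at eA₂
  push_cast at e eA₁ eA₂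
  have hM : ((s : ℂ) - r) * (1 + ε * (s - r)) * ((s + r) * (1 - ε * (s + r))) ≠ 0 := by
    refine mul_ne_zero (mul_ne_zero (sub_ne_zero.mpr (by exact_mod_cast h₁.symm)) hD)
      (mul_ne_zero ?_ ?_)
    · exact_mod_cast (show s + r ≠ 0 by omega)
    · convert hε (-(s + r)) using 2; push_cast; ring
  apply mul_left_cancel₀ hM
  linear_combination (s - r) * (1 + ε * (s - r)) * scaledD ε d r s * eA₁
    + (s + r) * (1 - ε * (s + r)) * scaledD ε d (r + 2 * s) s * eA₂
    - (1 + ε * (s - r)) * scaledD ε d (r + 2 * s) s * scaledD ε d r s * e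
    + scaledD ε d (r + 2 * s) s * scaledD ε d r s * h r (s - r) * hV

end Relations

section Values

variable {ε : ℂ} {g h d : ℤ → ℤ → ℂ}

theorem d_eq_vd (hε : ∀ k : ℤ, 1 + ε * k ≠ 0)
    (he : ∀ r s : ℤ, scaledD ε d r s = 1 + 2 * ε * s) (r s : ℤ) : d r s = vd ε r s := by
  rw [vd, eq_div_iff (by exact_mod_cast hε (r + s))]
  exact he r s

theorem h_eq_vh (hε : ∀ k : ℤ, 1 + ε * k ≠ 0)
    (hhd : ∀ r m : ℤ, h r m * scaledD ε d r (m + r) = -m * (1 + ε * m))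
    (he : ∀ r s : ℤ, scaledD ε d r s = 1 + 2 * ε * s) (r m : ℤ) : h r m = vh ε r m := by
  have e := hhd r m
  rw [he] at e
  push_cast at e
  rw [vh, eq_div_iff (by convert hε (2 * (m + r)) using 2; push_cast; ring)]
  exact e

theorem g_eq_vg (hε : ∀ k : ℤ, 1 + ε * k ≠ 0)
    (h1 : ∀ m r : ℤ, g m r - h r m = (m : ℂ) / 2 - (r : ℂ))
    (hh : ∀ r m : ℤ, h r m = vh ε r m) (m r : ℤ) : g m r = vg ε m r := by
  have hne : 1 + 2 * ε * ((m : ℂ) + r) ≠ 0 := by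
    convert hε (2 * (m + r)) using 2; push_cast; ring
  rw [show g m r = h r m + (m / 2 - r) by linear_combination h1 m r, hh, vg, eq_div_iff hne,
    add_mul, vh, div_mul_cancel₀ _ hne]
  ring

end Values

theorem super_virasoro_uniqueness_Ramond (ε : ℂ)
    (hε : (0 < ε.re ∧ ∀ k : ℤ, ε⁻¹ ≠ (k : ℂ)) ∨ (ε.re = 0 ∧ 0 < ε.im))
    (g h d : ℤ → ℤ → ℂ)
    (h1 : ∀ m r : ℤ, g m r - h r m = (m : ℂ) / 2 - (r : ℂ))
    (h2 : ∀ r s : ℤ, d r s + d s r = 2)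
    (h4 : ∀ m n r : ℤ,
      ((m : ℂ) / 2 - (r : ℂ)) * h (m + r) n
        = h r n * g m (n + r) - vf ε m n * h r (m + n))
    (h6 : ∀ m r s : ℤ,
      2 * vf ε ((r : ℂ) + (s : ℂ)) m
        = h s m * d r (m + s) + h r m * d s (m + r))
    (h7 : ∀ r s t : ℤ,
      2 * g (r + s) t = d s t * h r (s + t) + d r t * h s (r + t)) :
    ∀ m r s : ℤ,
      g m r = vg ε m r ∧ h r m = vh ε r m ∧ d r s = vd ε r s := by
  have hε' := one_add_mul_intCast_ne_zero hε
  have hε₀ : ε ≠ 0 := ne_zero_of_re_pos_or_im_pos (hε.imp And.left And.right)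
  have hhd := h_mul_scaledD hε' h6
  have hg := g_neg_two_mul_self h7 (h_zero_right hε' h2 hhd)
  have H : RamondRelations (2 * ε) (scaledD ε d) :=
    { add_swap := scaledD_add_swap h2
      periodic := fun _ _ ↦ scaledD_periodic hε' h4 hhd hg
      cross := fun _ _ ↦ scaledD_cross hε' h2 h6 hhd (scaledD_neg_self h1 h2 hhd hg) }
  have he := H.eq (mul_ne_zero two_ne_zero hε₀)
  have hh := h_eq_vh hε' hhd he
  intro m r s
  exact ⟨g_eq_vg hε' h1 hh m r, hh r m, d_eq_vd hε' he r s⟩
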